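/- Let R > 1, T > 0, and let a, b ∈ ℝ lie in one of the parameter regions of the definition of E₁(T) below. Define χ₀(y,s) := 1 if |y| ≤ s+R and 0 otherwise, and I(x,t) := ∫₀^t ∫_{x−t+s}^{x+t−s} χ₀(y,s) (1+|s+|y||)^{−(1+a)} (1+|s−|y||)^{−(1+b)} dy ds. Define E₁(T) := 1 if a+b > 0 and a > 0; log(T+3R) if (a+b = 0 and a > 0) or (a = 0 and b > 0); log²(T+3R) if a = b = 0; (T+2R)^{−a} if a < 0 and b > 0; (T+R)^{−a} log(T+3R) if a < 0 and b = 0; (T+2R)^{−(a+b)} if a+b < 0 and b < 0. Then there exists C = C(a,b,R) > 0 such that I(x,t) ≤ C E₁(T) for every (x,t) with |x| ≤ t+R and 0 ≤ t ≤ T. -/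

import Mathlib

open Real MeasureTheory Set
open scoped Classical

noncomputable section

/-- The quantity `E₁(T)` from Lemma 3.1. -/
def E1 (a b R T : ℝ) : ℝ :=
  if 0 < a + b ∧ 0 < a then 1
  else if (a + b = 0 ∧ 0 < a) ∨ (a = 0 ∧ 0 < b) then Real.log (T + 3 * R)
  else if a = 0 ∧ b = 0 then Real.log (T + 3 * R) ^ 2
  else if a < 0 ∧ 0 < b then (T + 2 * R) ^ (-a)
  else if a < 0 ∧ b = 0 then (T + R) ^ (-a) * Real.log (T + 3 * R)
  else (T + 2 * R) ^ (-(a + b))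

/-- The integral `I(x,t)` of the characteristic weight over the backward light triangle
with vertex `(x,t)`, restricted to the forward cone `{|y| ≤ s + R}`. -/
def Iweight (a b R x t : ℝ) : ℝ :=
  ∫ s in (0:ℝ)..t, ∫ y in (x - t + s)..(x + t - s),
    (if |y| ≤ s + R then
      (1 + abs (s + |y|)) ^ (-(1 + a)) * (1 + abs (s - |y|)) ^ (-(1 + b))
    else 0)

/-! ### Auxiliary machinery -/

/-- Closed form of `∫₀^M (1+z)^{-(1+c)} dz`. -/
def phi (c M : ℝ) : ℝ := if c = 0 then Real.log (1 + M) else (1 - (1 + M) ^ (-c)) / c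

lemma phi_eq (c M : ℝ) (hM : 0 ≤ M) :
    ∫ z in (0:ℝ)..M, (1 + z) ^ (-(1 + c)) = phi c M := by
  have h0 : (0:ℝ) ∉ Set.uIcc (1:ℝ) (1 + M) := by
    intro h
    rw [Set.mem_uIcc] at h
    rcases h with ⟨h1, _⟩ | ⟨_, h2⟩ <;> linarith
  have hcomp : ∫ z in (0:ℝ)..M, (1 + z) ^ (-(1 + c))
      = ∫ z in (1:ℝ)..(1 + M), z ^ (-(1 + c)) := by
    have := intervalIntegral.integral_comp_add_left (a := (0:ℝ)) (b := M)
      (fun z => z ^ (-(1 + c))) 1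
    simpa using this
  by_cases hc : c = 0
  · subst hc
    rw [phi, if_pos rfl, hcomp]
    have : ∫ z in (1:ℝ)..(1 + M), z ^ (-(1 + (0:ℝ))) = ∫ z in (1:ℝ)..(1 + M), z⁻¹ := by
      apply intervalIntegral.integral_congr
      intro z hz
      show z ^ (-(1 + (0:ℝ))) = z⁻¹
      rw [show (-(1 + (0:ℝ))) = (-1 : ℝ) by ring, Real.rpow_neg_one]
    rw [this, integral_inv h0, div_one]
  · have hne : -(1 + c) ≠ -1 := by
      intro h; apply hc; linarith [neg_injective h]
    rw [phi, if_neg hc, hcomp, integral_rpow (Or.inr ⟨hne, h0⟩)]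
    rw [show -(1 + c) + 1 = -c by ring, Real.one_rpow]
    ring

lemma phi_nonneg (c M : ℝ) (hM : 0 ≤ M) : 0 ≤ phi c M := by
  unfold phi
  split_ifs with hc
  · exact Real.log_nonneg (by linarith)
  · rcases lt_or_gt_of_ne hc with h | h
    · have h1 : (1:ℝ) ≤ (1 + M) ^ (-c) := Real.one_le_rpow (by linarith) (by linarith)
      have := div_nonneg (by linarith : (0:ℝ) ≤ (1 + M) ^ (-c) - 1) (by linarith : (0:ℝ) ≤ -c)
      calc (0:ℝ) ≤ ((1 + M) ^ (-c) - 1) / (-c) := this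
        _ = (1 - (1 + M) ^ (-c)) / c := by ring
    · have h1 : (1 + M) ^ (-c) ≤ 1 :=
        Real.rpow_le_one_of_one_le_of_nonpos (by linarith) (by linarith)
      exact div_nonneg (by linarith) h.le

lemma phi_le_pos {c : ℝ} (M : ℝ) (hc : 0 < c) (hM : 0 ≤ M) : phi c M ≤ 1 / c := by
  rw [phi, if_neg hc.ne']
  rw [div_le_div_iff_of_pos_right hc]
  have : (0:ℝ) ≤ (1 + M) ^ (-c) := Real.rpow_nonneg (by linarith) _
  linarith

lemma phi_zero (M : ℝ) : phi 0 M = Real.log (1 + M) := by rw [phi, if_pos rfl]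

lemma phi_le_neg {c : ℝ} (M : ℝ) (hc : c < 0) (hM : 0 ≤ M) :
    phi c M ≤ (1 + M) ^ (-c) / (-c) := by
  rw [phi, if_neg hc.ne]
  have : (1 - (1 + M) ^ (-c)) / c = ((1 + M) ^ (-c) - 1) / (-c) := by ring
  rw [this, div_le_div_iff_of_pos_right (by linarith : (0:ℝ) < -c)]
  linarith

lemma intervalIntegrable_rpow_shift (e : ℝ) {A B : ℝ} (hA : 0 ≤ A) (hB : 0 ≤ B) :
    IntervalIntegrable (fun z : ℝ => (1 + z) ^ e) volume A B := by
  apply ContinuousOn.intervalIntegrable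
  apply ContinuousOn.rpow_const (continuous_const.add continuous_id).continuousOn
  intro z hz
  left
  rcases Set.mem_uIcc.mp hz with ⟨h1, _⟩ | ⟨h1, _⟩ <;>
    · show (1:ℝ) + z ≠ 0; intro hzero; linarith

lemma phi_mono_exp {c c' : ℝ} (M : ℝ) (h : c' ≤ c) (hM : 0 ≤ M) : phi c M ≤ phi c' M := by
  rw [← phi_eq c M hM, ← phi_eq c' M hM]
  apply intervalIntegral.integral_mono_on hM
    (intervalIntegrable_rpow_shift _ le_rfl hM) (intervalIntegrable_rpow_shift _ le_rfl hM)
  intro z hz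
  exact Real.rpow_le_rpow_of_exponent_le (by linarith [hz.1]) (by linarith)

lemma continuousOn_phi (c t : ℝ) : ContinuousOn (fun s => phi c s) (Icc (0:ℝ) t) := by
  have hpos : ∀ s ∈ Icc (0:ℝ) t, (1:ℝ) + s ≠ 0 := fun s hs => by
    have := hs.1; intro h; linarith
  have hcont : ContinuousOn (fun s => (1:ℝ) + s) (Icc (0:ℝ) t) :=
    (continuous_const.add continuous_id).continuousOn
  unfold phi
  split_ifs with hc
  · exact ContinuousOn.log hcont hpos
  · exact ((continuousOn_const.sub (hcont.rpow_const (fun s hs => Or.inl (hpos s hs)))).div_const c)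

lemma key_pointwise (a θ R s Y : ℝ) (hR : 1 < R) (hs : 0 ≤ s) (hY : 0 ≤ Y)
    (hYs : Y ≤ s + R) (hθ : θ ≤ a) :
    (1 + (s + Y)) ^ (-(1 + a)) ≤
      (2 + 2 * R) ^ |1 + θ| * ((1 + s) ^ (-(1 + θ)) * (1 + |s - Y|) ^ (-(a - θ))) := by
  have hb : (0:ℝ) < 1 + (s + Y) := by linarith
  have hbs : (0:ℝ) < 1 + s := by linarith
  have habs : |s - Y| ≤ s + Y := by
    calc |s - Y| ≤ |s| + |Y| := abs_sub s Y
      _ = s + Y := by rw [abs_of_nonneg hs, abs_of_nonneg hY]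
  have habs0 : (0:ℝ) < 1 + |s - Y| := by positivity
  have hsplit : (1 + (s + Y)) ^ (-(1 + a))
      = (1 + (s + Y)) ^ (-(1 + θ)) * (1 + (s + Y)) ^ (-(a - θ)) := by
    rw [← Real.rpow_add hb]; ring_nf
  rw [hsplit]
  have h2 : (1 + (s + Y)) ^ (-(a - θ)) ≤ (1 + |s - Y|) ^ (-(a - θ)) :=
    Real.rpow_le_rpow_of_nonpos habs0 (by linarith) (by linarith)
  have h1 : (1 + (s + Y)) ^ (-(1 + θ)) ≤ (2 + 2 * R) ^ |1 + θ| * (1 + s) ^ (-(1 + θ)) := by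
    rcases le_or_gt 0 (1 + θ) with hθ0 | hθ0
    · have e1 : (1 + (s + Y)) ^ (-(1 + θ)) ≤ (1 + s) ^ (-(1 + θ)) :=
        Real.rpow_le_rpow_of_nonpos hbs (by linarith) (by linarith)
      have e2 : (1:ℝ) ≤ (2 + 2 * R) ^ |1 + θ| :=
        Real.one_le_rpow (by linarith) (abs_nonneg _)
      nlinarith [Real.rpow_nonneg hbs.le (-(1 + θ))]
    · have he : |1 + θ| = -(1 + θ) := abs_of_neg hθ0
      have hbase : 1 + (s + Y) ≤ (2 + 2 * R) * (1 + s) := by nlinarith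
      have e1 : (1 + (s + Y)) ^ (-(1 + θ)) ≤ ((2 + 2 * R) * (1 + s)) ^ (-(1 + θ)) :=
        Real.rpow_le_rpow hb.le hbase (by linarith)
      rw [Real.mul_rpow (by linarith) hbs.le] at e1
      rw [he]
      exact e1
  calc (1 + (s + Y)) ^ (-(1 + θ)) * (1 + (s + Y)) ^ (-(a - θ))
      ≤ ((2 + 2 * R) ^ |1 + θ| * (1 + s) ^ (-(1 + θ))) * (1 + |s - Y|) ^ (-(a - θ)) := by
        apply mul_le_mul h1 h2 (Real.rpow_nonneg hb.le _)
        positivity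
    _ = (2 + 2 * R) ^ |1 + θ| * ((1 + s) ^ (-(1 + θ)) * (1 + |s - Y|) ^ (-(a - θ))) := by ring

lemma inner_bound (a b R x t θ s : ℝ) (hR : 1 < R) (hs : 0 ≤ s) (hst : s ≤ t)
    (hθ : θ ≤ a) :
    (∫ y in (x - t + s)..(x + t - s),
      (if |y| ≤ s + R then
        (1 + abs (s + |y|)) ^ (-(1 + a)) * (1 + abs (s - |y|)) ^ (-(1 + b))
      else 0)) ≤
    2 * ((2 + 2 * R) ^ |1 + θ| * (1 + s) ^ (-(1 + θ)) *
      (phi (a + b - θ) s + phi (a + b - θ) R)) := by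
  set c : ℝ := a + b - θ with hc
  set CR : ℝ := (2 + 2 * R) ^ |1 + θ| with hCR
  set Cs : ℝ := CR * (1 + s) ^ (-(1 + θ)) with hCs
  have hM0 : 0 ≤ s + R := by linarith
  have hR0 : (0:ℝ) ≤ R := by linarith
  have hCR0 : 0 ≤ CR := Real.rpow_nonneg (by linarith) _
  have hCs0 : 0 ≤ Cs := mul_nonneg hCR0 (Real.rpow_nonneg (by linarith) _)
  set h : ℝ → ℝ := fun Y => (1 + |s - Y|) ^ (-(1 + c)) with hh
  have hhnn : ∀ Y, 0 ≤ h Y := fun Y => Real.rpow_nonneg (by positivity) _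
  have hhcont : Continuous h := by
    apply Continuous.rpow_const
      (continuous_const.add (continuous_const.sub continuous_id).abs)
    intro Y; left; show (1:ℝ) + |s - Y| ≠ 0; positivity
  set G0 : ℝ → ℝ := fun y => Cs * h |y| with hG0
  have hG0cont : Continuous G0 := continuous_const.mul (hhcont.comp continuous_abs)
  have hG0nn : ∀ y, 0 ≤ G0 y := fun y => mul_nonneg hCs0 (hhnn _)
  set g : ℝ → ℝ := fun y => if |y| ≤ s + R then G0 y else 0 with hg
  have hgnn : ∀ y, 0 ≤ g y := by
    intro y; simp only [hg]; split_ifs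
    · exact hG0nn y
    · exact le_rfl
  have hgeq : g = Set.indicator (Icc (-(s + R)) (s + R)) G0 := by
    funext y
    simp only [hg, Set.indicator_apply, Set.mem_Icc]
    by_cases hy : |y| ≤ s + R
    · rw [if_pos hy, if_pos (abs_le.mp hy)]
    · rw [if_neg hy, if_neg (fun hmem => hy (abs_le.mpr hmem))]
  have hgint : Integrable g volume := by
    rw [hgeq]
    exact (hG0cont.integrableOn_Icc).integrable_indicator measurableSet_Icc
  have hAB : x - t + s ≤ x + t - s := by linarith
  have wpt : ∀ y, (if |y| ≤ s + R then
      (1 + abs (s + |y|)) ^ (-(1 + a)) * (1 + abs (s - |y|)) ^ (-(1 + b)) else 0) ≤ g y := by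
    intro y
    simp only [hg]
    split_ifs with hy
    · have habs : abs (s + |y|) = s + |y| := abs_of_nonneg (by positivity)
      rw [habs]
      have hk := key_pointwise a θ R s |y| hR hs (abs_nonneg y) hy hθ
      have hmul := mul_le_mul_of_nonneg_right hk
        (Real.rpow_nonneg (by positivity : (0:ℝ) ≤ 1 + abs (s - |y|)) (-(1 + b)))
      have hcomb : (1 + abs (s - |y|)) ^ (-(a - θ)) * (1 + abs (s - |y|)) ^ (-(1 + b))
          = (1 + abs (s - |y|)) ^ (-(1 + c)) := by
        rw [← Real.rpow_add (by positivity)]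
        congr 1
        rw [hc]; ring
      calc (1 + (s + |y|)) ^ (-(1 + a)) * (1 + abs (s - |y|)) ^ (-(1 + b))
          ≤ CR * ((1 + s) ^ (-(1 + θ)) * (1 + abs (s - |y|)) ^ (-(a - θ)))
            * (1 + abs (s - |y|)) ^ (-(1 + b)) := hmul
        _ = Cs * ((1 + abs (s - |y|)) ^ (-(a - θ)) * (1 + abs (s - |y|)) ^ (-(1 + b))) := by
            rw [hCs]; ring
        _ = G0 y := by rw [hcomb]
    · exact le_rfl
  have step1 : (∫ y in (x - t + s)..(x + t - s),
      (if |y| ≤ s + R then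
        (1 + abs (s + |y|)) ^ (-(1 + a)) * (1 + abs (s - |y|)) ^ (-(1 + b)) else 0))
      ≤ ∫ y in (x - t + s)..(x + t - s), g y := by
    by_cases hw : IntervalIntegrable (fun y => (if |y| ≤ s + R then
        (1 + abs (s + |y|)) ^ (-(1 + a)) * (1 + abs (s - |y|)) ^ (-(1 + b)) else 0)) volume
        (x - t + s) (x + t - s)
    · exact intervalIntegral.integral_mono hAB hw hgint.intervalIntegrable wpt
    · rw [intervalIntegral.integral_undef hw]
      exact intervalIntegral.integral_nonneg hAB (fun y _ => hgnn y)
  have step2 : (∫ y in (x - t + s)..(x + t - s), g y) ≤ ∫ y, g y := by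
    rw [intervalIntegral.integral_of_le hAB]
    exact setIntegral_le_integral hgint (Filter.Eventually.of_forall hgnn)
  set f : ℝ → ℝ := fun Y => if Y ≤ s + R then Cs * h Y else 0 with hf
  have step3 : (∫ y, g y) = 2 * ∫ Y in Ioi (0:ℝ), f Y := by
    have : g = fun y => f |y| := rfl
    rw [this]
    exact _root_.integral_comp_abs (f := f)
  have step4 : (∫ Y in Ioi (0:ℝ), f Y) = ∫ Y in Ioc (0:ℝ) (s + R), Cs * h Y := by
    have : f = Set.indicator (Iic (s + R)) (fun Y => Cs * h Y) := by
      funext Y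
      simp [hf, Set.indicator_apply, Set.mem_Iic]
    rw [this, MeasureTheory.setIntegral_indicator measurableSet_Iic, Set.Ioi_inter_Iic]
  have step5 : (∫ Y in Ioc (0:ℝ) (s + R), Cs * h Y) = Cs * ∫ Y in (0:ℝ)..(s + R), h Y := by
    rw [← intervalIntegral.integral_of_le hM0, intervalIntegral.integral_const_mul]
  have step6 : (∫ Y in (0:ℝ)..(s + R), h Y) = phi c s + phi c R := by
    rw [← intervalIntegral.integral_add_adjacent_intervals
      (hhcont.intervalIntegrable 0 s) (hhcont.intervalIntegrable s (s + R))]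
    congr 1
    · have e1 : (∫ Y in (0:ℝ)..s, h Y)
          = ∫ Y in (0:ℝ)..s, (fun z => (1 + z) ^ (-(1 + c))) (s - Y) := by
        apply intervalIntegral.integral_congr
        intro Y hY
        have hY' : 0 ≤ s - Y := by
          rcases Set.mem_uIcc.mp hY with ⟨h1, h2⟩ | ⟨h1, h2⟩ <;> linarith
        simp only [hh]
        rw [abs_of_nonneg hY']
      rw [e1, intervalIntegral.integral_comp_sub_left (fun z => (1 + z) ^ (-(1 + c))) s]
      simpa using phi_eq c s hs
    · have e2 : (∫ Y in s..(s + R), h Y)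
          = ∫ Y in s..(s + R), (fun z => (1 + z) ^ (-(1 + c))) (Y - s) := by
        apply intervalIntegral.integral_congr
        intro Y hY
        have hY' : s - Y ≤ 0 := by
          rcases Set.mem_uIcc.mp hY with ⟨h1, h2⟩ | ⟨h1, h2⟩ <;> linarith
        simp only [hh]
        rw [abs_of_nonpos hY']
        ring_nf
      rw [e2, intervalIntegral.integral_comp_sub_right (fun z => (1 + z) ^ (-(1 + c))) s]
      simpa using phi_eq c R hR0
  calc (∫ y in (x - t + s)..(x + t - s),
      (if |y| ≤ s + R then
        (1 + abs (s + |y|)) ^ (-(1 + a)) * (1 + abs (s - |y|)) ^ (-(1 + b)) else 0))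
      ≤ ∫ y, g y := le_trans step1 step2
    _ = 2 * (Cs * (phi c s + phi c R)) := by rw [step3, step4, step5, step6]
    _ = 2 * (CR * (1 + s) ^ (-(1 + θ)) * (phi c s + phi c R)) := by rw [hCs]

lemma contOn_integrand (θ c R t : ℝ) :
    ContinuousOn (fun s : ℝ => (1 + s) ^ (-(1 + θ)) * (phi c s + phi c R))
      (Icc (0:ℝ) t) := by
  apply ContinuousOn.mul
  · apply ContinuousOn.rpow_const (continuous_const.add continuous_id).continuousOn
    intro s hs
    left
    have := hs.1
    show (1:ℝ) + s ≠ 0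
    intro h; linarith
  · exact (continuousOn_phi c t).add continuousOn_const

lemma master (a b R x t θ : ℝ) (hR : 1 < R) (ht : 0 ≤ t) (hθ : θ ≤ a) :
    Iweight a b R x t ≤ 2 * (2 + 2 * R) ^ |1 + θ| *
      ∫ s in (0:ℝ)..t, (1 + s) ^ (-(1 + θ)) * (phi (a + b - θ) s + phi (a + b - θ) R) := by
  set c : ℝ := a + b - θ with hc
  set CR : ℝ := (2 + 2 * R) ^ |1 + θ| with hCR
  have hR0 : (0:ℝ) ≤ R := by linarith
  have hCR0 : 0 ≤ CR := Real.rpow_nonneg (by linarith) _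
  set G : ℝ → ℝ := fun s => 2 * CR * ((1 + s) ^ (-(1 + θ)) * (phi c s + phi c R)) with hG
  have hGnn : ∀ s ∈ Icc (0:ℝ) t, 0 ≤ G s := by
    intro s hs
    have h1 : 0 ≤ (1 + s) ^ (-(1 + θ)) := Real.rpow_nonneg (by linarith [hs.1]) _
    have h2 : 0 ≤ phi c s := phi_nonneg c s hs.1
    have h3 : 0 ≤ phi c R := phi_nonneg c R hR0
    simp only [hG]
    positivity
  have hGint : IntervalIntegrable G volume 0 t := by
    apply ContinuousOn.intervalIntegrable_of_Icc ht
    exact (continuousOn_const.mul (contOn_integrand θ c R t))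
  have hstep : Iweight a b R x t ≤ ∫ s in (0:ℝ)..t, G s := by
    rw [Iweight]
    by_cases hF : IntervalIntegrable (fun s => ∫ y in (x - t + s)..(x + t - s),
        (if |y| ≤ s + R then
          (1 + abs (s + |y|)) ^ (-(1 + a)) * (1 + abs (s - |y|)) ^ (-(1 + b))
        else 0)) volume 0 t
    · apply intervalIntegral.integral_mono_on ht hF hGint
      intro s hs
      have := inner_bound a b R x t θ s hR hs.1 hs.2 hθ
      calc (∫ y in (x - t + s)..(x + t - s),
          (if |y| ≤ s + R then
            (1 + abs (s + |y|)) ^ (-(1 + a)) * (1 + abs (s - |y|)) ^ (-(1 + b))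
          else 0))
          ≤ 2 * (CR * (1 + s) ^ (-(1 + θ)) * (phi c s + phi c R)) := this
        _ = G s := by simp only [hG]; ring
    · rw [intervalIntegral.integral_undef hF]
      exact intervalIntegral.integral_nonneg ht hGnn
  calc Iweight a b R x t ≤ ∫ s in (0:ℝ)..t, G s := hstep
    _ = 2 * CR * ∫ s in (0:ℝ)..t, (1 + s) ^ (-(1 + θ)) * (phi c s + phi c R) := by
        simp only [hG]
        exact intervalIntegral.integral_const_mul _ _

lemma outer_bound (θ c R t K₁ K₂ p q : ℝ) (ht : 0 ≤ t)
    (hpt : ∀ s ∈ Icc (0:ℝ) t, (1 + s) ^ (-(1 + θ)) * (phi c s + phi c R) ≤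
      K₁ * (1 + s) ^ (-(1 + p)) + K₂ * (1 + s) ^ (-(1 + q))) :
    (∫ s in (0:ℝ)..t, (1 + s) ^ (-(1 + θ)) * (phi c s + phi c R)) ≤
      K₁ * phi p t + K₂ * phi q t := by
  have i1 : IntervalIntegrable (fun s : ℝ => (1 + s) ^ (-(1 + p))) volume 0 t :=
    intervalIntegrable_rpow_shift _ le_rfl ht
  have i2 : IntervalIntegrable (fun s : ℝ => (1 + s) ^ (-(1 + q))) volume 0 t :=
    intervalIntegrable_rpow_shift _ le_rfl ht
  have iR : IntervalIntegrable (fun s : ℝ => K₁ * (1 + s) ^ (-(1 + p)) +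
      K₂ * (1 + s) ^ (-(1 + q))) volume 0 t := (i1.const_mul K₁).add (i2.const_mul K₂)
  have iL : IntervalIntegrable
      (fun s : ℝ => (1 + s) ^ (-(1 + θ)) * (phi c s + phi c R)) volume 0 t :=
    ContinuousOn.intervalIntegrable_of_Icc ht (contOn_integrand θ c R t)
  calc (∫ s in (0:ℝ)..t, (1 + s) ^ (-(1 + θ)) * (phi c s + phi c R))
      ≤ ∫ s in (0:ℝ)..t, (K₁ * (1 + s) ^ (-(1 + p)) + K₂ * (1 + s) ^ (-(1 + q))) :=
        intervalIntegral.integral_mono_on ht iL iR hpt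
    _ = K₁ * phi p t + K₂ * phi q t := by
        rw [intervalIntegral.integral_add (i1.const_mul K₁) (i2.const_mul K₂),
          intervalIntegral.integral_const_mul, intervalIntegral.integral_const_mul,
          phi_eq p t ht, phi_eq q t ht]

lemma combined (a b R x t θ K₁ K₂ p q : ℝ) (hR : 1 < R) (ht : 0 ≤ t) (hθ : θ ≤ a)
    (hpt : ∀ s ∈ Icc (0:ℝ) t,
      (1 + s) ^ (-(1 + θ)) * (phi (a + b - θ) s + phi (a + b - θ) R) ≤
        K₁ * (1 + s) ^ (-(1 + p)) + K₂ * (1 + s) ^ (-(1 + q))) :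
    Iweight a b R x t ≤ 2 * (2 + 2 * R) ^ |1 + θ| * (K₁ * phi p t + K₂ * phi q t) := by
  refine (master a b R x t θ hR ht hθ).trans ?_
  have h2CR : (0:ℝ) ≤ 2 * (2 + 2 * R) ^ |1 + θ| :=
    mul_nonneg (by norm_num) (Real.rpow_nonneg (by linarith) _)
  exact mul_le_mul_of_nonneg_left (outer_bound θ (a + b - θ) R t K₁ K₂ p q ht hpt) h2CR

set_option maxHeartbeats 2000000 in
/-- The core estimate `(3.4)`: `I(x,t) ≤ C E₁(T)` for `|x| ≤ t + R`, `0 ≤ t ≤ T`. -/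
theorem weight_triangle_integral_estimate (a b R : ℝ) (hR : 1 < R)
    (hab : (0 < a + b ∧ 0 < a) ∨ (a + b = 0 ∧ 0 < a) ∨ (a = 0 ∧ 0 < b) ∨
      (a = 0 ∧ b = 0) ∨ (a < 0 ∧ 0 < b) ∨ (a < 0 ∧ b = 0) ∨
      (a + b < 0 ∧ b < 0)) :
    ∃ C > 0, ∀ T : ℝ, 0 < T → ∀ x t : ℝ, |x| ≤ t + R → 0 ≤ t → t ≤ T →
      Iweight a b R x t ≤ C * E1 a b R T := by
  have hR0 : (0:ℝ) ≤ R := by linarith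
  have hbase : (0:ℝ) < 2 + 2 * R := by linarith
  rcases hab with ⟨h1, h2⟩ | ⟨h1, h2⟩ | ⟨h1, h2⟩ | ⟨h1, h2⟩ | ⟨h1, h2⟩ | ⟨h1, h2⟩ | ⟨h1, h2⟩
  · -- Case 1 : 0 < a + b, 0 < a
    set θ : ℝ := min a (a + b) / 2 with hθdef
    have hθpos : 0 < θ := by
      simp only [hθdef]
      linarith [lt_min h2 h1]
    have hθa : θ ≤ a := by
      have := min_le_left a (a + b)
      simp only [hθdef]; linarith
    have hcpos : 0 < a + b - θ := by
      have := min_le_right a (a + b)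
      simp only [hθdef]; linarith
    set CR : ℝ := 2 * (2 + 2 * R) ^ |1 + θ| with hCRdef
    have hCRpos : 0 < CR := by
      have := Real.rpow_pos_of_pos hbase |1 + θ|
      simp only [hCRdef]; linarith
    refine ⟨CR * (2 / (a + b - θ)) * (1 / θ), by positivity, ?_⟩
    intro T hT x t hx ht htT
    have hE : E1 a b R T = 1 := if_pos ⟨h1, h2⟩
    rw [hE, mul_one]
    have hcomb := combined a b R x t θ (2 / (a + b - θ)) 0 θ θ hR ht hθa ?_
    · calc Iweight a b R x t
          ≤ 2 * (2 + 2 * R) ^ |1 + θ| *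
            (2 / (a + b - θ) * phi θ t + 0 * phi θ t) := hcomb
        _ = CR * (2 / (a + b - θ)) * phi θ t := by rw [hCRdef]; ring
        _ ≤ CR * (2 / (a + b - θ)) * (1 / θ) := by
            apply mul_le_mul_of_nonneg_left (phi_le_pos t hθpos ht)
            positivity
    · intro s hs
      have hX : (0:ℝ) ≤ (1 + s) ^ (-(1 + θ)) := Real.rpow_nonneg (by linarith [hs.1]) _
      have hp1 : phi (a + b - θ) s ≤ 1 / (a + b - θ) := phi_le_pos s hcpos hs.1
      have hp2 : phi (a + b - θ) R ≤ 1 / (a + b - θ) := phi_le_pos R hcpos hR0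
      calc (1 + s) ^ (-(1 + θ)) * (phi (a + b - θ) s + phi (a + b - θ) R)
          ≤ (1 + s) ^ (-(1 + θ)) * (2 / (a + b - θ)) := by
            apply mul_le_mul_of_nonneg_left _ hX
            have : 1 / (a + b - θ) + 1 / (a + b - θ) = 2 / (a + b - θ) := by ring
            linarith
        _ = 2 / (a + b - θ) * (1 + s) ^ (-(1 + θ)) + 0 * (1 + s) ^ (-(1 + θ)) := by ring
  · -- Case 2 : a + b = 0, 0 < a
    set θ : ℝ := a / 2 with hθdef
    have hθpos : 0 < θ := by simp only [hθdef]; linarith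
    have hθa : θ ≤ a := by simp only [hθdef]; linarith
    have hceq : a + b - θ = -(a / 2) := by simp only [hθdef]; linarith
    set CR : ℝ := 2 * (2 + 2 * R) ^ |1 + θ| with hCRdef
    have hCRpos : 0 < CR := by
      have := Real.rpow_pos_of_pos hbase |1 + θ|
      simp only [hCRdef]; linarith
    set K₂ : ℝ := 2 / a * (1 + R) ^ (a / 2) with hK2def
    have hK2pos : 0 < K₂ := by
      have := Real.rpow_pos_of_pos (show (0:ℝ) < 1 + R by linarith) (a / 2)
      simp only [hK2def]; positivity
    refine ⟨CR * (2 / a + K₂ * (1 / θ)), by positivity, ?_⟩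
    intro T hT x t hx ht htT
    have hE : E1 a b R T = Real.log (T + 3 * R) := by
      rw [E1, if_neg (fun hcon => by linarith [hcon.1]), if_pos (Or.inl ⟨h1, h2⟩)]
    rw [hE]
    have hL1 : 1 ≤ Real.log (T + 3 * R) := by
      rw [Real.le_log_iff_exp_le (by linarith)]
      have := Real.exp_one_lt_d9
      linarith
    have hlogt : Real.log (1 + t) ≤ Real.log (T + 3 * R) :=
      Real.log_le_log (by linarith) (by linarith)
    have hcomb := combined a b R x t θ (2 / a) K₂ 0 θ hR ht hθa ?_
    · calc Iweight a b R x t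
          ≤ 2 * (2 + 2 * R) ^ |1 + θ| * (2 / a * phi 0 t + K₂ * phi θ t) := hcomb
        _ = CR * (2 / a * Real.log (1 + t) + K₂ * phi θ t) := by
            rw [hCRdef, phi_zero]
        _ ≤ CR * (2 / a * Real.log (T + 3 * R) + K₂ * (1 / θ)) := by
            apply mul_le_mul_of_nonneg_left _ hCRpos.le
            have hphi := phi_le_pos t hθpos ht
            have e1 : 2 / a * Real.log (1 + t) ≤ 2 / a * Real.log (T + 3 * R) := by
              apply mul_le_mul_of_nonneg_left hlogt (by positivity)
            nlinarith [hK2pos]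
        _ ≤ CR * ((2 / a + K₂ * (1 / θ)) * Real.log (T + 3 * R)) := by
            apply mul_le_mul_of_nonneg_left _ hCRpos.le
            have h0' : (0:ℝ) ≤ K₂ * (1 / θ) := by positivity
            nlinarith [mul_le_mul_of_nonneg_left hL1 h0']
        _ = CR * (2 / a + K₂ * (1 / θ)) * Real.log (T + 3 * R) := by ring
    · intro s hs
      have hs1 : (0:ℝ) < 1 + s := by linarith [hs.1]
      have hX : (0:ℝ) ≤ (1 + s) ^ (-(1 + θ)) := Real.rpow_nonneg hs1.le _
      have hp1 : phi (a + b - θ) s ≤ (1 + s) ^ (a / 2) / (a / 2) := by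
        have := phi_le_neg (c := -(a/2)) s (by linarith) hs.1
        rw [neg_neg] at this
        rw [hceq]; exact this
      have hp2 : phi (a + b - θ) R ≤ (1 + R) ^ (a / 2) / (a / 2) := by
        have := phi_le_neg (c := -(a/2)) R (by linarith) hR0
        rw [neg_neg] at this
        rw [hceq]; exact this
      have hmerge : (1 + s) ^ (-(1 + θ)) * (1 + s) ^ (a / 2) = (1 + s) ^ (-(1 + (0:ℝ))) := by
        rw [← Real.rpow_add hs1]
        congr 1
        rw [hθdef]; ring
      calc (1 + s) ^ (-(1 + θ)) * (phi (a + b - θ) s + phi (a + b - θ) R)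
          ≤ (1 + s) ^ (-(1 + θ)) *
            ((1 + s) ^ (a / 2) / (a / 2) + (1 + R) ^ (a / 2) / (a / 2)) := by
            apply mul_le_mul_of_nonneg_left _ hX
            linarith
        _ = 2 / a * ((1 + s) ^ (-(1 + θ)) * (1 + s) ^ (a / 2))
            + K₂ * (1 + s) ^ (-(1 + θ)) := by rw [hK2def]; ring
        _ = 2 / a * (1 + s) ^ (-(1 + (0:ℝ))) + K₂ * (1 + s) ^ (-(1 + θ)) := by rw [hmerge]
  · -- Case 3 : a = 0, 0 < b
    set CR : ℝ := 2 * (2 + 2 * R) ^ |1 + (0:ℝ)| with hCRdef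
    have hCRpos : 0 < CR := by
      have := Real.rpow_pos_of_pos hbase |1 + (0:ℝ)|
      simp only [hCRdef]; linarith
    refine ⟨CR * (2 / b), by positivity, ?_⟩
    intro T hT x t hx ht htT
    have hE : E1 a b R T = Real.log (T + 3 * R) := by
      rw [E1, if_neg (fun hcon => by linarith [hcon.2]), if_pos (Or.inr ⟨h1, h2⟩)]
    rw [hE]
    have hlogt : Real.log (1 + t) ≤ Real.log (T + 3 * R) :=
      Real.log_le_log (by linarith) (by linarith)
    have hcomb := combined a b R x t 0 (2 / b) 0 0 0 hR ht (by rw [h1]) ?_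
    · calc Iweight a b R x t
          ≤ 2 * (2 + 2 * R) ^ |1 + (0:ℝ)| * (2 / b * phi 0 t + 0 * phi 0 t) := hcomb
        _ = CR * (2 / b) * Real.log (1 + t) := by rw [hCRdef, phi_zero]; ring
        _ ≤ CR * (2 / b) * Real.log (T + 3 * R) := by
            apply mul_le_mul_of_nonneg_left hlogt (by positivity)
    · intro s hs
      have hcb : a + b - 0 = b := by rw [h1]; ring
      rw [hcb]
      have hX : (0:ℝ) ≤ (1 + s) ^ (-(1 + (0:ℝ))) := Real.rpow_nonneg (by linarith [hs.1]) _
      have hp1 : phi b s ≤ 1 / b := phi_le_pos s h2 hs.1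
      have hp2 : phi b R ≤ 1 / b := phi_le_pos R h2 hR0
      calc (1 + s) ^ (-(1 + (0:ℝ))) * (phi b s + phi b R)
          ≤ (1 + s) ^ (-(1 + (0:ℝ))) * (2 / b) := by
            apply mul_le_mul_of_nonneg_left _ hX
            have : 1 / b + 1 / b = 2 / b := by ring
            linarith
        _ = 2 / b * (1 + s) ^ (-(1 + (0:ℝ))) + 0 * (1 + s) ^ (-(1 + (0:ℝ))) := by ring
  · -- Case 4 : a = 0, b = 0
    set CR : ℝ := 2 * (2 + 2 * R) ^ |1 + (0:ℝ)| with hCRdef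
    have hCRpos : 0 < CR := by
      have := Real.rpow_pos_of_pos hbase |1 + (0:ℝ)|
      simp only [hCRdef]; linarith
    refine ⟨CR * 2, by positivity, ?_⟩
    intro T hT x t hx ht htT
    have hE : E1 a b R T = Real.log (T + 3 * R) ^ 2 := by
      rw [E1, if_neg (fun hcon => by linarith [hcon.2]),
        if_neg (fun hcon => by rcases hcon with ⟨_, hc2⟩ | ⟨_, hc2⟩ <;> linarith),
        if_pos ⟨h1, h2⟩]
    rw [hE]
    have hlogt : Real.log (1 + t) ≤ Real.log (T + 3 * R) :=
      Real.log_le_log (by linarith) (by linarith)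
    have hlogR : Real.log (1 + R) ≤ Real.log (T + 3 * R) :=
      Real.log_le_log (by linarith) (by linarith)
    have hlogt0 : 0 ≤ Real.log (1 + t) := Real.log_nonneg (by linarith)
    have hlogR0 : 0 ≤ Real.log (1 + R) := Real.log_nonneg (by linarith)
    have hcomb := combined a b R x t 0 (Real.log (1 + t) + Real.log (1 + R)) 0 0 0 hR ht
      (by rw [h1]) ?_
    · calc Iweight a b R x t
          ≤ 2 * (2 + 2 * R) ^ |1 + (0:ℝ)| *
            ((Real.log (1 + t) + Real.log (1 + R)) * phi 0 t + 0 * phi 0 t) := hcomb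
        _ = CR * ((Real.log (1 + t) + Real.log (1 + R)) * Real.log (1 + t)) := by
            rw [hCRdef, phi_zero]; ring
        _ ≤ CR * 2 * Real.log (T + 3 * R) ^ 2 := by
            have key : (Real.log (1 + t) + Real.log (1 + R)) * Real.log (1 + t)
                ≤ 2 * Real.log (T + 3 * R) ^ 2 := by nlinarith
            nlinarith
    · intro s hs
      have hcb : a + b - 0 = 0 := by rw [h1, h2]; ring
      rw [hcb]
      have hX : (0:ℝ) ≤ (1 + s) ^ (-(1 + (0:ℝ))) := Real.rpow_nonneg (by linarith [hs.1]) _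
      have hp1 : phi 0 s ≤ Real.log (1 + t) := by
        rw [phi_zero]
        exact Real.log_le_log (by linarith [hs.1]) (by linarith [hs.2])
      have hp2 : phi 0 R = Real.log (1 + R) := phi_zero R
      calc (1 + s) ^ (-(1 + (0:ℝ))) * (phi 0 s + phi 0 R)
          ≤ (1 + s) ^ (-(1 + (0:ℝ))) * (Real.log (1 + t) + Real.log (1 + R)) := by
            apply mul_le_mul_of_nonneg_left _ hX
            rw [hp2]
            linarith
        _ = (Real.log (1 + t) + Real.log (1 + R)) * (1 + s) ^ (-(1 + (0:ℝ)))
            + 0 * (1 + s) ^ (-(1 + (0:ℝ))) := by ring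
  · -- Case 5 : a < 0, 0 < b
    set CR : ℝ := 2 * (2 + 2 * R) ^ |1 + a| with hCRdef
    have hCRpos : 0 < CR := by
      have := Real.rpow_pos_of_pos hbase |1 + a|
      simp only [hCRdef]; linarith
    have hnega0 : (0:ℝ) < -a := by linarith
    refine ⟨CR * (2 / b) * (1 / (-a)), by positivity, ?_⟩
    intro T hT x t hx ht htT
    have hE : E1 a b R T = (T + 2 * R) ^ (-a) := by
      rw [E1, if_neg (fun hcon => by linarith [hcon.2]),
        if_neg (fun hcon => by rcases hcon with ⟨_, hc2⟩ | ⟨hc1, _⟩ <;> linarith),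
        if_neg (fun hcon => by linarith [hcon.1]),
        if_pos ⟨h1, h2⟩]
    rw [hE]
    have hcomb := combined a b R x t a (2 / b) 0 a a hR ht le_rfl ?_
    · have hphi : phi a t ≤ (T + 2 * R) ^ (-a) / (-a) := by
        have e1 : phi a t ≤ (1 + t) ^ (-a) / (-a) := phi_le_neg t h1 ht
        have e2 : (1 + t) ^ (-a) ≤ (T + 2 * R) ^ (-a) :=
          Real.rpow_le_rpow (by linarith) (by linarith) (by linarith)
        have : (1 + t) ^ (-a) / (-a) ≤ (T + 2 * R) ^ (-a) / (-a) :=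
          (div_le_div_iff_of_pos_right hnega0).mpr e2
        linarith
      calc Iweight a b R x t
          ≤ 2 * (2 + 2 * R) ^ |1 + a| * (2 / b * phi a t + 0 * phi a t) := hcomb
        _ = CR * (2 / b) * phi a t := by rw [hCRdef]; ring
        _ ≤ CR * (2 / b) * ((T + 2 * R) ^ (-a) / (-a)) := by
            apply mul_le_mul_of_nonneg_left hphi (by positivity)
        _ = CR * (2 / b) * (1 / (-a)) * (T + 2 * R) ^ (-a) := by ring
    · intro s hs
      have hcb : a + b - a = b := by ring
      rw [hcb]
      have hX : (0:ℝ) ≤ (1 + s) ^ (-(1 + a)) := Real.rpow_nonneg (by linarith [hs.1]) _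
      have hp1 : phi b s ≤ 1 / b := phi_le_pos s h2 hs.1
      have hp2 : phi b R ≤ 1 / b := phi_le_pos R h2 hR0
      calc (1 + s) ^ (-(1 + a)) * (phi b s + phi b R)
          ≤ (1 + s) ^ (-(1 + a)) * (2 / b) := by
            apply mul_le_mul_of_nonneg_left _ hX
            have : 1 / b + 1 / b = 2 / b := by ring
            linarith
        _ = 2 / b * (1 + s) ^ (-(1 + a)) + 0 * (1 + s) ^ (-(1 + a)) := by ring
  · -- Case 6 : a < 0, b = 0
    have hnega0 : (0:ℝ) < -a := by linarith
    set CR : ℝ := 2 * (2 + 2 * R) ^ |1 + a| with hCRdef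
    have hCRpos : 0 < CR := by
      have := Real.rpow_pos_of_pos hbase |1 + a|
      simp only [hCRdef]; linarith
    refine ⟨CR * 2 * (1 / (-a)), by positivity, ?_⟩
    intro T hT x t hx ht htT
    have hE : E1 a b R T = (T + R) ^ (-a) * Real.log (T + 3 * R) := by
      rw [E1, if_neg (fun hcon => by linarith [hcon.2]),
        if_neg (fun hcon => by rcases hcon with ⟨_, hc2⟩ | ⟨hc1, _⟩ <;> linarith),
        if_neg (fun hcon => by linarith [hcon.1]),
        if_neg (fun hcon => by linarith [hcon.2]),
        if_pos ⟨h1, h2⟩]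
    rw [hE]
    have hL1 : 1 ≤ Real.log (T + 3 * R) := by
      rw [Real.le_log_iff_exp_le (by linarith)]
      have := Real.exp_one_lt_d9
      linarith
    have hlogt : Real.log (1 + t) ≤ Real.log (T + 3 * R) :=
      Real.log_le_log (by linarith) (by linarith)
    have hlogR : Real.log (1 + R) ≤ Real.log (T + 3 * R) :=
      Real.log_le_log (by linarith) (by linarith)
    have hlogt0 : 0 ≤ Real.log (1 + t) := Real.log_nonneg (by linarith)
    have hlogR0 : 0 ≤ Real.log (1 + R) := Real.log_nonneg (by linarith)
    have hcomb := combined a b R x t a (Real.log (1 + t) + Real.log (1 + R)) 0 a a hR ht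
      le_rfl ?_
    · have hphi : phi a t ≤ (T + R) ^ (-a) / (-a) := by
        have e1 : phi a t ≤ (1 + t) ^ (-a) / (-a) := phi_le_neg t h1 ht
        have e2 : (1 + t) ^ (-a) ≤ (T + R) ^ (-a) :=
          Real.rpow_le_rpow (by linarith) (by linarith) (by linarith)
        have : (1 + t) ^ (-a) / (-a) ≤ (T + R) ^ (-a) / (-a) :=
          (div_le_div_iff_of_pos_right hnega0).mpr e2
        linarith
      have hphi0 : 0 ≤ phi a t := phi_nonneg a t ht
      have hTR0 : (0:ℝ) ≤ (T + R) ^ (-a) := Real.rpow_nonneg (by linarith) _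
      calc Iweight a b R x t
          ≤ 2 * (2 + 2 * R) ^ |1 + a| *
            ((Real.log (1 + t) + Real.log (1 + R)) * phi a t + 0 * phi a t) := hcomb
        _ = CR * ((Real.log (1 + t) + Real.log (1 + R)) * phi a t) := by
            rw [hCRdef]; ring
        _ ≤ CR * ((2 * Real.log (T + 3 * R)) * ((T + R) ^ (-a) / (-a))) := by
            apply mul_le_mul_of_nonneg_left _ hCRpos.le
            apply mul_le_mul (by linarith) hphi hphi0 (by linarith)
        _ = CR * 2 * (1 / (-a)) * ((T + R) ^ (-a) * Real.log (T + 3 * R)) := by ring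
    · intro s hs
      have hcb : a + b - a = 0 := by rw [h2]; ring
      rw [hcb]
      have hX : (0:ℝ) ≤ (1 + s) ^ (-(1 + a)) := Real.rpow_nonneg (by linarith [hs.1]) _
      have hp1 : phi 0 s ≤ Real.log (1 + t) := by
        rw [phi_zero]
        exact Real.log_le_log (by linarith [hs.1]) (by linarith [hs.2])
      have hp2 : phi 0 R = Real.log (1 + R) := phi_zero R
      calc (1 + s) ^ (-(1 + a)) * (phi 0 s + phi 0 R)
          ≤ (1 + s) ^ (-(1 + a)) * (Real.log (1 + t) + Real.log (1 + R)) := by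
            apply mul_le_mul_of_nonneg_left _ hX
            rw [hp2]; linarith
        _ = (Real.log (1 + t) + Real.log (1 + R)) * (1 + s) ^ (-(1 + a))
            + 0 * (1 + s) ^ (-(1 + a)) := by ring
  · -- Case 7 : a + b < 0, b < 0
    have hnegb : (0:ℝ) < -b := by linarith
    have hnegab : (0:ℝ) < -(a + b) := by linarith
    set θ : ℝ := a + b / 2 with hθdef
    have hθa : θ ≤ a := by simp only [hθdef]; linarith
    have habθ : a + b ≤ θ := by simp only [hθdef]; linarith
    have hceq : a + b - θ = b / 2 := by simp only [hθdef]; ring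
    set CR : ℝ := 2 * (2 + 2 * R) ^ |1 + θ| with hCRdef
    have hCRpos : 0 < CR := by
      have := Real.rpow_pos_of_pos hbase |1 + θ|
      simp only [hCRdef]; linarith
    set K₂ : ℝ := 2 / (-b) * (1 + R) ^ (-(b / 2)) with hK2def
    have hK2pos : 0 < K₂ := by
      have := Real.rpow_pos_of_pos (show (0:ℝ) < 1 + R by linarith) (-(b / 2))
      simp only [hK2def]; positivity
    refine ⟨CR * (2 / (-b) + K₂) * (1 / (-(a + b))), by positivity, ?_⟩
    intro T hT x t hx ht htT
    have hE : E1 a b R T = (T + 2 * R) ^ (-(a + b)) := by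
      rw [E1, if_neg (fun hcon => by linarith [hcon.1]),
        if_neg (fun hcon => by rcases hcon with ⟨hc1, _⟩ | ⟨_, hc2⟩ <;> linarith),
        if_neg (fun hcon => by linarith [hcon.2]),
        if_neg (fun hcon => by linarith [hcon.2]),
        if_neg (fun hcon => by linarith [hcon.2])]
    rw [hE]
    have hcomb := combined a b R x t θ (2 / (-b)) K₂ (a + b) θ hR ht hθa ?_
    · have hphi : phi (a + b) t ≤ (T + 2 * R) ^ (-(a + b)) / (-(a + b)) := by
        have e1 : phi (a + b) t ≤ (1 + t) ^ (-(a + b)) / (-(a + b)) := phi_le_neg t h1 ht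
        have e2 : (1 + t) ^ (-(a + b)) ≤ (T + 2 * R) ^ (-(a + b)) :=
          Real.rpow_le_rpow (by linarith) (by linarith) (by linarith)
        have : (1 + t) ^ (-(a + b)) / (-(a + b)) ≤ (T + 2 * R) ^ (-(a + b)) / (-(a + b)) :=
          (div_le_div_iff_of_pos_right hnegab).mpr e2
        linarith
      have hmono : phi θ t ≤ phi (a + b) t := phi_mono_exp t habθ ht
      have hphi0 : 0 ≤ phi (a + b) t := phi_nonneg (a + b) t ht
      calc Iweight a b R x t
          ≤ 2 * (2 + 2 * R) ^ |1 + θ| * (2 / (-b) * phi (a + b) t + K₂ * phi θ t) := hcomb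
        _ ≤ CR * ((2 / (-b) + K₂) * phi (a + b) t) := by
            rw [hCRdef]
            have e3 : K₂ * phi θ t ≤ K₂ * phi (a + b) t :=
              mul_le_mul_of_nonneg_left hmono hK2pos.le
            nlinarith [hCRpos]
        _ ≤ CR * ((2 / (-b) + K₂) * ((T + 2 * R) ^ (-(a + b)) / (-(a + b)))) := by
            apply mul_le_mul_of_nonneg_left _ hCRpos.le
            apply mul_le_mul_of_nonneg_left hphi (by positivity)
        _ = CR * (2 / (-b) + K₂) * (1 / (-(a + b))) * (T + 2 * R) ^ (-(a + b)) := by ring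
    · intro s hs
      rw [hceq]
      have hs1 : (0:ℝ) < 1 + s := by linarith [hs.1]
      have hX : (0:ℝ) ≤ (1 + s) ^ (-(1 + θ)) := Real.rpow_nonneg hs1.le _
      have hp1 : phi (b / 2) s ≤ (1 + s) ^ (-(b / 2)) / (-(b / 2)) :=
        phi_le_neg s (by linarith) hs.1
      have hp2 : phi (b / 2) R ≤ (1 + R) ^ (-(b / 2)) / (-(b / 2)) :=
        phi_le_neg R (by linarith) hR0
      have hmerge : (1 + s) ^ (-(1 + θ)) * (1 + s) ^ (-(b / 2))
          = (1 + s) ^ (-(1 + (a + b))) := by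
        rw [← Real.rpow_add hs1]
        congr 1
        rw [hθdef]; ring
      calc (1 + s) ^ (-(1 + θ)) * (phi (b / 2) s + phi (b / 2) R)
          ≤ (1 + s) ^ (-(1 + θ)) *
            ((1 + s) ^ (-(b / 2)) / (-(b / 2)) + (1 + R) ^ (-(b / 2)) / (-(b / 2))) := by
            apply mul_le_mul_of_nonneg_left _ hX
            linarith
        _ = 2 / (-b) * ((1 + s) ^ (-(1 + θ)) * (1 + s) ^ (-(b / 2)))
            + K₂ * (1 + s) ^ (-(1 + θ)) := by rw [hK2def]; ring
        _ = 2 / (-b) * (1 + s) ^ (-(1 + (a + b))) + K₂ * (1 + s) ^ (-(1 + θ)) := by rw [hmerge]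

end
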